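/- In a strongly connected directed graph, if for every nonempty proper subset S of nodes the minimum-cost arc entering S has cost at most ξ times the minimum-cost arc leaving S, then for all nodes i and j the bottleneck costs satisfy b(j,i) ≤ ξ·b(i,j). -/

import Mathlib

open scoped Classical

variable {V : Type*}

/-- `IsWalk A u v l`: `u :: l` is a directed walk from `u` to `v` in the digraph with
arc relation `A`. -/
def IsWalk (A : V → V → Prop) (u v : V) (l : List V) : Prop :=
  List.Chain A u l ∧ (u :: l).getLast (List.cons_ne_nil u l) = v

/-- The list of arcs of the walk `u :: l`. -/
def walkArcs (u : V) (l : List V) : List (V × V) := (u :: l).zip l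

/-- The cost of a walk: the sum of the costs of its arcs. -/
noncomputable def walkCost (c : V → V → ℝ) (u : V) (l : List V) : ℝ :=
  ((walkArcs u l).map fun e => c e.1 e.2).sum

/-- A (simple) directed cycle through the arc `(x, y)`: the arc `(x, y)` together with a
walk from `y` back to `x` visiting pairwise distinct nodes. -/
def IsCycleThrough (A : V → V → Prop) (x y : V) (l : List V) : Prop :=
  A x y ∧ IsWalk A y x l ∧ (y :: l).Nodup

/-- The arcs of the cycle through `(x, y)` given by the return walk `y :: l`. -/
def cycleArcs (x y : V) (l : List V) : List (V × V) := (x, y) :: walkArcs y l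

/-- `G = (V, A, c)` is `ξ`-min-balanced: every arc lies on a directed cycle all of whose
arcs have cost at most `ξ` times the cost of the given arc. -/
def MinBalanced (A : V → V → Prop) (c : V → V → ℝ) (ξ : ℝ) : Prop :=
  ∀ x y, A x y → ∃ l, IsCycleThrough A x y l ∧
    ∀ f ∈ cycleArcs x y l, c f.1 f.2 ≤ ξ * c x y

/-- A digraph is strongly connected if there is a directed walk between any two nodes. -/
def StronglyConnected (A : V → V → Prop) : Prop := ∀ u v : V, ∃ l, IsWalk A u v l

/-- The bottleneck cost `b(i,j)`: the least `t` such that there is a directed `i`–`j`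
walk all of whose arcs have cost at most `t`. -/
noncomputable def bottleneck (A : V → V → Prop) (c : V → V → ℝ) (i j : V) : ℝ :=
  sInf {t | ∃ l, IsWalk A i j l ∧ ∀ f ∈ walkArcs i l, c f.1 f.2 ≤ t}

/-- The balance value `β(e)` of the arc `e = (x, y)`: the smallest `r` such that there is
a directed cycle through `e` all of whose arcs have cost at most `r`. -/
noncomputable def balanceValue (A : V → V → Prop) (c : V → V → ℝ) (x y : V) : ℝ :=
  sInf {r | ∃ l, IsCycleThrough A x y l ∧ ∀ f ∈ cycleArcs x y l, c f.1 f.2 ≤ r}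

/-!
Fix an `i`–`j` walk whose arcs cost at most `t`, and let `R` be the set of nodes reachable from
`j` through arcs of cost at most `ξ t`. If `i ∉ R`, the walk enters `R` through an arc of cost at
most `t`, so the cut condition for `Rᶜ` yields an arc leaving `R` of cost at most `ξ t`; its head
then lies in `R`, which is absurd. Hence some `j`–`i` walk has all arcs of cost at most `ξ t`.
-/

open Relation

def cutCosts (A : V → V → Prop) (c : V → V → ℝ) (S T : Set V) : Set ℝ :=
  {t | ∃ x ∈ S, ∃ y ∈ T, A x y ∧ c x y = t}

def CutBalanced (A : V → V → Prop) (c : V → V → ℝ) (ξ : ℝ) : Prop :=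
  ∀ S : Set V, S.Nonempty → S ≠ Set.univ →
    sInf (cutCosts A c Sᶜ S) ≤ ξ * sInf (cutCosts A c S Sᶜ)

section

variable {A : V → V → Prop} {c : V → V → ℝ}

lemma isWalk_nil {u v : V} : IsWalk A u v [] ↔ u = v := by
  change List.IsChain A [u] ∧ _ ↔ _
  simp

lemma isWalk_cons {u v a : V} {l : List V} :
    IsWalk A u v (a :: l) ↔ A u a ∧ IsWalk A a v l := by
  change List.IsChain A (u :: a :: l) ∧ _ ↔ A u a ∧ List.IsChain A (a :: l) ∧ _
  simp [and_assoc]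

lemma walkArcs_cons {u a : V} {l : List V} :
    walkArcs u (a :: l) = (u, a) :: walkArcs a l := rfl

lemma IsWalk.exists_crossing_arc {P : V → Prop} {u v : V} {l : List V}
    (h : IsWalk A u v l) (hu : ¬P u) (hv : P v) :
    ∃ f ∈ walkArcs u l, A f.1 f.2 ∧ ¬P f.1 ∧ P f.2 := by
  induction l generalizing u with
  | nil => exact absurd (isWalk_nil.1 h ▸ hv) hu
  | cons a l ih =>
    obtain ⟨hua, ha⟩ := isWalk_cons.1 h
    by_cases hPa : P a
    · exact ⟨(u, a), List.mem_cons_self .., hua, hu, hPa⟩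
    · obtain ⟨f, hf, hfA, hf1, hf2⟩ := ih ha hPa
      exact ⟨f, List.mem_cons_of_mem _ hf, hfA, hf1, hf2⟩

lemma exists_isWalk_of_reflTransGen {p : V → V → Prop} {u v : V}
    (h : ReflTransGen (fun x y => A x y ∧ p x y) u v) :
    ∃ l, IsWalk A u v l ∧ ∀ f ∈ walkArcs u l, p f.1 f.2 := by
  induction h using ReflTransGen.head_induction_on with
  | refl => exact ⟨[], isWalk_nil.2 rfl, by simp [walkArcs]⟩
  | head hab _ ih =>
    obtain ⟨l, hl, hp⟩ := ih
    exact ⟨_ :: l, isWalk_cons.2 ⟨hab.1, hl⟩, by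
      rw [walkArcs_cons]; exact List.forall_mem_cons.2 ⟨hab.2, hp⟩⟩

lemma bottleneck_self (i : V) : bottleneck A c i i = 0 := by
  have huniv : {t | ∃ l, IsWalk A i i l ∧ ∀ f ∈ walkArcs i l, c f.1 f.2 ≤ t} = Set.univ :=
    Set.eq_univ_of_forall fun _ => ⟨[], isWalk_nil.2 rfl, by simp [walkArcs]⟩
  rw [bottleneck, huniv, Real.sInf_univ]

variable [Finite V]

lemma bottleneck_le_of_isWalk {i j : V} {l : List V} {t : ℝ} (hij : i ≠ j)
    (hw : IsWalk A i j l) (ht : ∀ f ∈ walkArcs i l, c f.1 f.2 ≤ t) :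
    bottleneck A c i j ≤ t := by
  obtain ⟨m, hm⟩ := (Set.finite_range (Function.uncurry c)).bddBelow
  refine csInf_le ⟨m, ?_⟩ ⟨l, hw, ht⟩
  rintro s ⟨_ | ⟨a, l'⟩, hw', hs⟩
  · exact absurd (isWalk_nil.1 hw') hij
  · exact (hm ⟨(i, a), rfl⟩).trans (hs (i, a) (List.mem_cons_self ..))

lemma le_bottleneck (hsc : StronglyConnected A) {i j : V} {s : ℝ}
    (h : ∀ l t, IsWalk A i j l → (∀ f ∈ walkArcs i l, c f.1 f.2 ≤ t) → s ≤ t) :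
    s ≤ bottleneck A c i j := by
  obtain ⟨M, hM⟩ := (Set.finite_range (Function.uncurry c)).bddAbove
  obtain ⟨l, hl⟩ := hsc i j
  exact le_csInf ⟨M, l, hl, fun f _ => hM ⟨f, rfl⟩⟩ fun t ⟨l, hw, ht⟩ => h l t hw ht

lemma finite_cutCosts (S T : Set V) : (cutCosts A c S T).Finite :=
  (Set.finite_range (Function.uncurry c)).subset fun _ ⟨x, _, y, _, _, hxy⟩ => ⟨(x, y), hxy⟩

lemma CutBalanced.exists_arc_into_le {ξ t : ℝ} (hcut : CutBalanced A c ξ) (hξ : 0 ≤ ξ)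
    {T : Set V} (hin : ∃ x ∈ Tᶜ, ∃ y ∈ T, A x y)
    (hout : ∃ x ∈ T, ∃ y ∈ Tᶜ, A x y ∧ c x y ≤ t) :
    ∃ x ∈ Tᶜ, ∃ y ∈ T, A x y ∧ c x y ≤ ξ * t := by
  obtain ⟨x, hx, y, hy, hxy⟩ := hin
  obtain ⟨x', hx', y', hy', hxy', hct⟩ := hout
  have hne : (cutCosts A c Tᶜ T).Nonempty := ⟨_, x, hx, y, hy, hxy, rfl⟩
  obtain ⟨u, hu, v, hv, huv, hcuv⟩ := hne.csInf_mem (finite_cutCosts Tᶜ T)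
  refine ⟨u, hu, v, hv, huv, ?_⟩
  calc c u v = sInf (cutCosts A c Tᶜ T) := hcuv
    _ ≤ ξ * sInf (cutCosts A c T Tᶜ) := hcut T ⟨y, hy⟩ fun h => hx (h ▸ Set.mem_univ x)
    _ ≤ ξ * t := by
      gcongr
      exact (csInf_le (finite_cutCosts T Tᶜ).bddBelow ⟨x', hx', y', hy', hxy', rfl⟩).trans hct

lemma CutBalanced.exists_return_walk {ξ t : ℝ} (hcut : CutBalanced A c ξ) (hξ : 0 ≤ ξ)
    (hsc : StronglyConnected A) {i j : V} {l : List V}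
    (hw : IsWalk A i j l) (ht : ∀ f ∈ walkArcs i l, c f.1 f.2 ≤ t) :
    ∃ l', IsWalk A j i l' ∧ ∀ f ∈ walkArcs j l', c f.1 f.2 ≤ ξ * t := by
  set R := {v | ReflTransGen (fun x y => A x y ∧ c x y ≤ ξ * t) j v}
  suffices hi : i ∈ R from exists_isWalk_of_reflTransGen hi
  by_contra hi
  obtain ⟨l', hw'⟩ := hsc j i
  obtain ⟨f, -, hfA, hf1, hf2⟩ := hw'.exists_crossing_arc (P := (· ∉ R)) (not_not.2 .refl) hi
  obtain ⟨g, hg, hgA, hg1, hg2⟩ := hw.exists_crossing_arc (P := (· ∈ R)) hi .refl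
  obtain ⟨x, hx, y, hy, hxy, hcxy⟩ :=
    hcut.exists_arc_into_le hξ (T := Rᶜ) ⟨f.1, hf1, f.2, hf2, hfA⟩
      ⟨g.1, hg1, g.2, not_not.2 hg2, hgA, ht g hg⟩
  exact hy ((not_not.1 hx).tail ⟨hxy, hcxy⟩)

end

theorem cut_condition_implies_bottleneck_general [Fintype V] (A : V → V → Prop) (c : V → V → ℝ)
    (ξ : ℝ) (hξ : 1 ≤ ξ)
    (hsc : StronglyConnected A)
    (hcut : ∀ S : Set V, S.Nonempty → S ≠ Set.univ →
      sInf {t | ∃ x ∉ S, ∃ y ∈ S, A x y ∧ c x y = t} ≤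
        ξ * sInf {t | ∃ x ∈ S, ∃ y ∉ S, A x y ∧ c x y = t}) :
    ∀ i j : V, bottleneck A c j i ≤ ξ * bottleneck A c i j := by
  intro i j
  rcases eq_or_ne i j with rfl | hij
  · rw [bottleneck_self, mul_zero]
  have hξ0 : 0 < ξ := by linarith
  rw [← div_le_iff₀' hξ0]
  refine le_bottleneck hsc fun l t hw ht => ?_
  obtain ⟨l', hw', ht'⟩ := CutBalanced.exists_return_walk hcut hξ0.le hsc hw ht
  rw [div_le_iff₀' hξ0]
  exact bottleneck_le_of_isWalk hij.symm hw' ht'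

/-- In a strongly connected digraph, if for every nonempty proper node
subset `S` the minimum cost of an arc entering `S` is at most `ξ` times the minimum cost
of an arc leaving `S`, then `b(j,i) ≤ ξ·b(i,j)` for all nodes `i`, `j`. -/
theorem cut_condition_implies_bottleneck [Fintype V] (A : V → V → Prop) (c : V → V → ℝ)
    (hc : ∀ x y, A x y → 0 ≤ c x y) (ξ : ℝ) (hξ : 1 ≤ ξ)
    (hsc : StronglyConnected A)
    (hcut : ∀ S : Set V, S.Nonempty → S ≠ Set.univ →
      sInf {t | ∃ x ∉ S, ∃ y ∈ S, A x y ∧ c x y = t} ≤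
        ξ * sInf {t | ∃ x ∈ S, ∃ y ∉ S, A x y ∧ c x y = t}) :
    ∀ i j : V, bottleneck A c j i ≤ ξ * bottleneck A c i j :=
  cut_condition_implies_bottleneck_general A c ξ hξ hsc hcut
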